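/- Let Z₁ and W be independent standard normal random variables, ρ ∈ (-1, 1), and Z₂ = ρ Z₁ + √(1-ρ²) W, so that (Z₁, Z₂) is bivariate standard Gaussian with correlation ρ. Then lim_{u→1⁻} P(Φ(Z₁) > u, Φ(Z₂) > u) / (1 - u) = 0; that is, any bivariate Gaussian pair with correlation strictly less than one is asymptotically independent. -/

import Mathlib

open MeasureTheory ProbabilityTheory Real Set Filter
open scoped Topology

/-- The standard normal distribution function. -/
noncomputable def Phi (z : ℝ) : ℝ :=
  ∫ t in Set.Iic z, (Real.sqrt (2 * Real.pi))⁻¹ * Real.exp (-(t ^ 2) / 2)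

/-- The transformation `g(z) = (1 - Φ(z))⁻¹ - 1`. -/
noncomputable def g (z : ℝ) : ℝ := (1 - Phi z)⁻¹ - 1

/-!
Write `u = Φ z`, so that `u → 1⁻` becomes `z → ∞` and the ratio becomes
`P(Z₁ > z, Z₂ > z) / (1 - Φ z)`. Fix `c > 1` with `max ρ 0 * c < 1`. On the joint exceedance,
either `Z₁ > c z`, which has probability `o(1 - Φ z)` since Gaussian tails satisfy
`1 - Φ (c z) ≤ c e^{-(c² - 1) z² / 2} (1 - Φ z)`; or `Z₁ > z` and
`√(1 - ρ²) W > (1 - max ρ 0 * c) z`, which by independence has probability `1 - Φ z` times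
a Gaussian tail tending to `0`.
-/

lemma gaussianPDFReal_zero_one (t : ℝ) :
    gaussianPDFReal 0 1 t = (√(2 * π))⁻¹ * exp (-(t ^ 2) / 2) := by
  simp [gaussianPDFReal]

lemma gaussianPDFReal_zero_one_mul (c t : ℝ) :
    gaussianPDFReal 0 1 (c * t) = exp (-((c ^ 2 - 1) * t ^ 2) / 2) * gaussianPDFReal 0 1 t := by
  rw [gaussianPDFReal_zero_one, gaussianPDFReal_zero_one, mul_left_comm, ← exp_add]
  ring_nf

lemma Phi_eq_integral (z : ℝ) : Phi z = ∫ t in Iic z, gaussianPDFReal 0 1 t := by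
  simp only [gaussianPDFReal_zero_one, Phi]

lemma Phi_sub_Phi (x y : ℝ) : Phi y - Phi x = ∫ t in x..y, gaussianPDFReal 0 1 t := by
  rw [Phi_eq_integral, Phi_eq_integral]
  exact intervalIntegral.integral_Iic_sub_Iic (integrable_gaussianPDFReal 0 1).integrableOn
    (integrable_gaussianPDFReal 0 1).integrableOn

lemma Phi_strictMono : StrictMono Phi := fun x y hxy => sub_pos.1 <| by
  rw [Phi_sub_Phi]
  exact intervalIntegral.intervalIntegral_pos_of_pos
    (integrable_gaussianPDFReal 0 1).intervalIntegrable (gaussianPDFReal_pos 0 1 · one_ne_zero) hxy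

lemma continuous_Phi : Continuous Phi := by
  have h : Phi = fun z => Phi 0 + ∫ t in (0 : ℝ)..z, gaussianPDFReal 0 1 t := by
    ext z
    rw [← Phi_sub_Phi, add_sub_cancel]
  rw [h]
  exact continuous_const.add (intervalIntegral.continuous_primitive
    (fun _ _ => (integrable_gaussianPDFReal 0 1).intervalIntegrable) 0)

lemma measureReal_gaussianReal_zero_one (s : Set ℝ) :
    (gaussianReal 0 1).real s = ∫ t in s, gaussianPDFReal 0 1 t := by
  rw [measureReal_def, gaussianReal_apply_eq_integral 0 one_ne_zero,
    ENNReal.toReal_ofReal (setIntegral_nonneg_of_ae (ae_of_all _ (gaussianPDFReal_nonneg 0 1)))]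

lemma Phi_eq_cdf : Phi = cdf (gaussianReal 0 1) := by
  ext z
  rw [Phi_eq_integral, cdf_eq_real, measureReal_gaussianReal_zero_one]

lemma one_sub_Phi_eq_measureReal (z : ℝ) : 1 - Phi z = (gaussianReal 0 1).real (Ioi z) := by
  rw [Phi_eq_cdf, cdf_eq_real, ← compl_Iic, probReal_compl_eq_one_sub measurableSet_Iic]

lemma one_sub_Phi_eq_integral (z : ℝ) : 1 - Phi z = ∫ t in Ioi z, gaussianPDFReal 0 1 t := by
  rw [one_sub_Phi_eq_measureReal, measureReal_gaussianReal_zero_one]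

lemma tendsto_Phi_atTop : Tendsto Phi atTop (𝓝 1) := Phi_eq_cdf ▸ tendsto_cdf_atTop _

lemma tendsto_Phi_atBot : Tendsto Phi atBot (𝓝 0) := Phi_eq_cdf ▸ tendsto_cdf_atBot _

lemma Phi_pos (z : ℝ) : 0 < Phi z :=
  (Phi_eq_cdf ▸ cdf_nonneg _ (z - 1)).trans_lt (Phi_strictMono (sub_one_lt z))

lemma Phi_lt_one (z : ℝ) : Phi z < 1 :=
  (Phi_strictMono (lt_add_one z)).trans_le (Phi_eq_cdf ▸ cdf_le_one _ (z + 1))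

lemma one_sub_Phi_pos (z : ℝ) : 0 < 1 - Phi z := sub_pos.2 (Phi_lt_one z)

lemma exists_Phi_eq : ∀ u ∈ Ioo (0 : ℝ) 1, ∃ z, Phi z = u := by
  rintro u ⟨hu0, hu1⟩
  exact mem_range_of_exists_le_of_exists_ge continuous_Phi
    ((tendsto_Phi_atBot.eventually (gt_mem_nhds hu0)).exists.imp fun _ => le_of_lt)
    ((tendsto_Phi_atTop.eventually (lt_mem_nhds hu1)).exists.imp fun _ => le_of_lt)

noncomputable def PhiOrderIso : ℝ ≃o Ioo (0 : ℝ) 1 :=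
  StrictMono.orderIsoOfSurjective (fun z => ⟨Phi z, Phi_pos z, Phi_lt_one z⟩)
    (fun _ _ h => Phi_strictMono h)
    (fun u => (exists_Phi_eq u u.2).imp fun _ h => Subtype.ext h)

lemma map_Phi_atTop : map Phi atTop = 𝓝[<] 1 := by
  rw [← map_coe_Ioo_atTop (zero_lt_one' ℝ), ← PhiOrderIso.map_atTop, map_map]
  rfl

/-- Substitute `t ↦ c t` in the tail integral: on `t > z ≥ 0` the density picks up the factor
`exp (-(c² - 1) t² / 2) ≤ exp (-(c² - 1) z² / 2)`. -/
lemma one_sub_Phi_mul_le {c z : ℝ} (hc : 1 ≤ c) (hz : 0 ≤ z) :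
    1 - Phi (c * z) ≤ c * exp (-((c ^ 2 - 1) * z ^ 2) / 2) * (1 - Phi z) := by
  have hc0 : 0 < c := one_pos.trans_le hc
  have hsubst : 1 - Phi (c * z) = c * ∫ t in Ioi z, gaussianPDFReal 0 1 (c * t) := by
    rw [one_sub_Phi_eq_integral, integral_comp_mul_left_Ioi _ z hc0, smul_eq_mul,
      mul_inv_cancel_left₀ hc0.ne']
  rw [hsubst, mul_assoc, one_sub_Phi_eq_integral,
    ← integral_const_mul (exp (-((c ^ 2 - 1) * z ^ 2) / 2))]
  refine mul_le_mul_of_nonneg_left (setIntegral_mono_on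
    ((integrable_gaussianPDFReal 0 1).comp_mul_left' hc0.ne').integrableOn
    ((integrable_gaussianPDFReal 0 1).integrableOn.const_mul _) measurableSet_Ioi
    fun t ht => ?_) hc0.le
  rw [gaussianPDFReal_zero_one_mul]
  gcongr
  · exact gaussianPDFReal_nonneg 0 1 t
  · nlinarith [mem_Ioi.1 ht]
  · exact mem_Ioi.1 ht |>.le

lemma tendsto_one_sub_Phi_atTop : Tendsto (fun z => 1 - Phi z) atTop (𝓝 0) := by
  simpa using tendsto_Phi_atTop.const_sub 1

lemma tendsto_one_sub_Phi_mul_div {c : ℝ} (hc : 1 < c) :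
    Tendsto (fun z => (1 - Phi (c * z)) / (1 - Phi z)) atTop (𝓝 0) := by
  have hexponent : Tendsto (fun z : ℝ => -((c ^ 2 - 1) * z ^ 2) / 2) atTop atBot :=
    (tendsto_neg_atTop_atBot.comp ((tendsto_pow_atTop two_ne_zero).const_mul_atTop
      (by nlinarith))).atBot_div_const two_pos
  have hdom : Tendsto (fun z => c * exp (-((c ^ 2 - 1) * z ^ 2) / 2)) atTop (𝓝 0) := by
    simpa using (tendsto_exp_atBot.comp hexponent).const_mul c
  refine squeeze_zero' (Eventually.of_forall fun z =>
    div_nonneg (one_sub_Phi_pos _).le (one_sub_Phi_pos z).le) ?_ hdom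
  filter_upwards [eventually_ge_atTop 0] with z hz
  rw [div_le_iff₀ (one_sub_Phi_pos z)]
  exact one_sub_Phi_mul_le hc.le hz

lemma exists_one_lt_mul_lt_one {m : ℝ} (hm : m < 1) : ∃ c, 1 < c ∧ m * c < 1 := by
  have hnear : ∀ᶠ c in 𝓝 (1 : ℝ), m * c < 1 :=
    (continuous_const_mul m).continuousAt.eventually (gt_mem_nhds (by simpa using hm))
  exact ((eventually_mem_nhdsWithin (s := Ioi (1 : ℝ))).and
    (eventually_nhdsWithin_of_eventually_nhds hnear)).exists

lemma lt_or_lt_of_lt_mul_add {ρ c x y z : ℝ} (hz : 0 ≤ z) (hx : z < x)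
    (hy : z < ρ * x + y) : c * z < x ∨ (1 - max ρ 0 * c) * z < y := by
  refine or_iff_not_imp_left.2 fun hxc => ?_
  have hρx : ρ * x ≤ max ρ 0 * (c * z) := by
    rcases le_total ρ 0 with hρ | hρ
    · rw [max_eq_right hρ, zero_mul]
      exact mul_nonpos_of_nonpos_of_nonneg hρ (hz.trans hx.le)
    · rw [max_eq_left hρ]
      exact mul_le_mul_of_nonneg_left (not_lt.1 hxc) hρ
  linarith [show (1 - max ρ 0 * c) * z = z - max ρ 0 * (c * z) by ring]

section Exceedance

variable {Ω : Type*} [MeasurableSpace Ω] {P : Measure Ω} {X W : Ω → ℝ}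

lemma measureReal_preimage_Ioi_of_map_eq (hX : Measurable X)
    (hlaw : P.map X = gaussianReal 0 1) (t : ℝ) : P.real (X ⁻¹' Ioi t) = 1 - Phi t := by
  rw [← map_measureReal_apply hX measurableSet_Ioi, hlaw, one_sub_Phi_eq_measureReal]

lemma measureReal_joint_exceedance_le [IsProbabilityMeasure P] (hX : Measurable X)
    (hW : Measurable W) (hXlaw : P.map X = gaussianReal 0 1) (hWlaw : P.map W = gaussianReal 0 1)
    (hXW : IndepFun X W P) (ρ : ℝ) {s c z : ℝ} (hs : 0 < s) (hz : 0 ≤ z) :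
    P.real {ω | z < X ω ∧ z < ρ * X ω + s * W ω}
      ≤ (1 - Phi z) * (1 - Phi ((1 - max ρ 0 * c) / s * z)) + (1 - Phi (c * z)) := by
  set k := (1 - max ρ 0 * c) / s
  have hsub : {ω | z < X ω ∧ z < ρ * X ω + s * W ω}
      ⊆ (X ⁻¹' Ioi z ∩ W ⁻¹' Ioi (k * z)) ∪ X ⁻¹' Ioi (c * z) := by
    rintro ω ⟨hx, hy⟩
    rcases lt_or_lt_of_lt_mul_add hz hx hy with hbig | hrest
    · exact Or.inr hbig
    · refine Or.inl ⟨hx, ?_⟩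
      rw [mem_preimage, mem_Ioi, div_mul_eq_mul_div, div_lt_iff₀' hs]
      exact hrest
  have hindep :
      P.real (X ⁻¹' Ioi z ∩ W ⁻¹' Ioi (k * z)) = (1 - Phi z) * (1 - Phi (k * z)) := by
    rw [measureReal_def, hXW.measure_inter_preimage_eq_mul _ _ measurableSet_Ioi
      measurableSet_Ioi, ENNReal.toReal_mul, ← measureReal_def, ← measureReal_def,
      measureReal_preimage_Ioi_of_map_eq hX hXlaw, measureReal_preimage_Ioi_of_map_eq hW hWlaw]
  calc P.real {ω | z < X ω ∧ z < ρ * X ω + s * W ω}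
      ≤ P.real ((X ⁻¹' Ioi z ∩ W ⁻¹' Ioi (k * z)) ∪ X ⁻¹' Ioi (c * z)) :=
        measureReal_mono hsub
    _ ≤ P.real (X ⁻¹' Ioi z ∩ W ⁻¹' Ioi (k * z)) + P.real (X ⁻¹' Ioi (c * z)) :=
      measureReal_union_le _ _
    _ = _ := by rw [hindep, measureReal_preimage_Ioi_of_map_eq hX hXlaw]

end Exceedance

/-- For a bivariate standard Gaussian pair `(Z₁, Z₂)` with correlation
`ρ ∈ (-1,1)`, `lim_{u→1⁻} P(Φ(Z₁) > u, Φ(Z₂) > u)/(1-u) = 0`: any bivariate Gaussian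
pair with correlation strictly less than one is asymptotically independent. -/
theorem gaussian_asymptotic_independence
    {Ω : Type*} [MeasurableSpace Ω] (P : Measure Ω) [IsProbabilityMeasure P]
    (Z₁ W : Ω → ℝ) (hZ₁m : Measurable Z₁) (hWm : Measurable W)
    (hZ₁ : Measure.map Z₁ P = gaussianReal 0 1)
    (hW : Measure.map W P = gaussianReal 0 1)
    (hZW : IndepFun Z₁ W P)
    (ρ : ℝ) (hρ : ρ ∈ Set.Ioo (-1 : ℝ) 1)
    (Z₂ : Ω → ℝ) (hZ₂ : ∀ ω, Z₂ ω = ρ * Z₁ ω + Real.sqrt (1 - ρ ^ 2) * W ω) :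
    Tendsto
      (fun u => (P {ω | u < Phi (Z₁ ω) ∧ u < Phi (Z₂ ω)}).toReal / (1 - u))
      (nhdsWithin 1 (Set.Iio 1)) (nhds 0) := by
  obtain ⟨c, hc, hρc⟩ := exists_one_lt_mul_lt_one (max_lt hρ.2 one_pos)
  have hs : 0 < √(1 - ρ ^ 2) := sqrt_pos.2 (by nlinarith [hρ.1, hρ.2])
  have hk : 0 < (1 - max ρ 0 * c) / √(1 - ρ ^ 2) := div_pos (sub_pos.2 hρc) hs
  have hdom := (tendsto_one_sub_Phi_atTop.comp (tendsto_id.const_mul_atTop hk)).add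
    (tendsto_one_sub_Phi_mul_div hc)
  rw [zero_add] at hdom
  rw [← map_Phi_atTop, tendsto_map'_iff]
  refine squeeze_zero' (Eventually.of_forall fun z =>
    div_nonneg ENNReal.toReal_nonneg (one_sub_Phi_pos z).le) ?_ hdom
  filter_upwards [eventually_ge_atTop 0] with z hz
  have hpos := one_sub_Phi_pos z
  simp only [Function.comp_apply, Phi_strictMono.lt_iff_lt, hZ₂, ← measureReal_def]
  calc _ ≤ ((1 - Phi z) * (1 - Phi ((1 - max ρ 0 * c) / √(1 - ρ ^ 2) * z))
          + (1 - Phi (c * z))) / (1 - Phi z) :=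
        div_le_div_of_nonneg_right
          (measureReal_joint_exceedance_le hZ₁m hWm hZ₁ hW hZW ρ hs hz) hpos.le
    _ = _ := by rw [add_div, mul_div_cancel_left₀ _ hpos.ne']; rfl
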